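/- Let (X₁, X₂) be a jointly Gaussian pair of real random variables (the law of the ℝ²-valued random vector (X₁, X₂) is a Gaussian measure), and let m_{i j} = E[X₁^i · X₂^j]. Then m_{1,3} = 3·m_{11}·m_{02} − 2·m_{01}^3·m_{10}. -/

import Mathlib

open MeasureTheory ProbabilityTheory
open Real Set


lemma int_pow_exp {b : ℝ} (hb : 0 < b) (k : ℕ) :
    Integrable fun x : ℝ => x ^ k * Real.exp (-b * x ^ 2) := by
  have h := integrable_rpow_mul_exp_neg_mul_sq hb (s := (k : ℝ)) (lt_of_lt_of_le (by norm_num) (Nat.cast_nonneg k))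
  simpa [Real.rpow_natCast] using h

lemma int_pow_shift_exp {b : ℝ} (hb : 0 < b) (k : ℕ) (c : ℝ) :
    Integrable fun x : ℝ => (x + c) ^ k * Real.exp (-b * x ^ 2) := by
  have : (fun x : ℝ => (x + c) ^ k * Real.exp (-b * x ^ 2))
      = fun x : ℝ => ∑ j ∈ Finset.range (k + 1),
        (c ^ (k - j) * (k.choose j : ℝ)) * (x ^ j * Real.exp (-b * x ^ 2)) := by
    funext x
    rw [add_pow, Finset.sum_mul]
    exact Finset.sum_congr rfl fun j _ => by ring
  rw [this]
  exact integrable_finset_sum _ fun j _ => (int_pow_exp hb j).const_mul _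

lemma integral_comp_neg' (f : ℝ → ℝ) : ∫ x : ℝ, f (-x) = ∫ x : ℝ, f x := by
  have A : MeasurableEmbedding fun x : ℝ => -x :=
    (Homeomorph.neg ℝ).measurableEmbedding
  calc ∫ x : ℝ, f (-x) = ∫ y, f y ∂(Measure.map (fun x : ℝ => -x) volume) :=
        (A.integral_map f).symm
    _ = ∫ x : ℝ, f x := by rw [Measure.map_neg_eq_self]

lemma K_odd {b : ℝ} (k : ℕ) (hk : Odd k) :
    ∫ x : ℝ, x ^ k * Real.exp (-b * x ^ 2) = 0 := by
  have h := integral_comp_neg' (fun x => x ^ k * Real.exp (-b * x ^ 2))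
  have h' : ∫ x : ℝ, -(x ^ k * Real.exp (-b * x ^ 2)) = ∫ x : ℝ, x ^ k * Real.exp (-b * x ^ 2) := by
    rw [← h]; congr 1; funext x; rw [hk.neg_pow]; ring_nf
  rw [integral_neg] at h'
  linarith


lemma K_even {b : ℝ} (hb : 0 < b) (q : ℕ) (hq : Even q) :
    ∫ x : ℝ, x ^ q * Real.exp (-b * x ^ 2)
      = b ^ (-((q : ℝ) + 1) / 2) * Real.Gamma (((q : ℝ) + 1) / 2) := by
  have h1 : ∫ x : ℝ, x ^ q * Real.exp (-b * x ^ 2)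
      = 2 * ∫ x in Ioi (0 : ℝ), x ^ q * Real.exp (-b * x ^ 2) := by
    rw [← integral_comp_abs (f := fun x => x ^ q * Real.exp (-b * x ^ 2))]
    congr 1; funext x
    rw [hq.pow_abs, sq_abs]
  have h2 : ∫ x in Ioi (0 : ℝ), x ^ q * Real.exp (-b * x ^ 2)
      = ∫ x in Ioi (0 : ℝ), x ^ (q : ℝ) * Real.exp (-b * x ^ (2 : ℝ)) := by
    refine setIntegral_congr_fun measurableSet_Ioi fun x hx => ?_
    rw [← Real.rpow_natCast x q, ← Real.rpow_natCast x 2]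
    norm_num
  rw [h1, h2, integral_rpow_mul_exp_neg_mul_rpow (by norm_num)
    (lt_of_lt_of_le (by norm_num) (Nat.cast_nonneg q)) hb]
  ring


lemma Gamma_three_halves : Real.Gamma (3 / 2) = Real.sqrt π / 2 := by
  rw [show (3 / 2 : ℝ) = 1 / 2 + 1 by norm_num, Real.Gamma_add_one (by norm_num),
    Real.Gamma_one_half_eq]
  ring

lemma Gamma_five_halves : Real.Gamma (5 / 2) = 3 * Real.sqrt π / 4 := by
  rw [show (5 / 2 : ℝ) = 3 / 2 + 1 by norm_num, Real.Gamma_add_one (by norm_num),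
    Gamma_three_halves]
  ring

lemma K2_eq {b : ℝ} (hb : 0 < b) :
    ∫ x : ℝ, x ^ 2 * Real.exp (-b * x ^ 2)
      = (∫ x : ℝ, Real.exp (-b * x ^ 2)) / (2 * b) := by
  rw [K_even hb 2 ⟨1, rfl⟩, integral_gaussian,
    show (-(((2:ℕ) : ℝ) + 1) / 2) = (-(3/2) : ℝ) by norm_num,
    show ((((2:ℕ) : ℝ) + 1) / 2) = (3/2 : ℝ) by norm_num,
    Gamma_three_halves, Real.sqrt_div (Real.pi_pos.le), Real.sqrt_eq_rpow b]
  have h1 : b ^ (-(3/2) : ℝ) = (b ^ ((1:ℝ)/2))⁻¹ * b⁻¹ := by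
    rw [← Real.rpow_neg_one b, ← Real.rpow_neg hb.le, ← Real.rpow_add hb]
    norm_num
  rw [h1, show (1 / (2:ℝ)) = ((1:ℝ)/2) by norm_num]
  have h2 : (b : ℝ) ^ ((1:ℝ)/2) ≠ 0 := by positivity
  generalize hs : b ^ ((1:ℝ)/2) = s at h2 ⊢
  field_simp

lemma K4_eq {b : ℝ} (hb : 0 < b) :
    ∫ x : ℝ, x ^ 4 * Real.exp (-b * x ^ 2)
      = (∫ x : ℝ, Real.exp (-b * x ^ 2)) * (3 / (4 * b ^ 2)) := by
  rw [K_even hb 4 ⟨2, rfl⟩, integral_gaussian,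
    show (-(((4:ℕ) : ℝ) + 1) / 2) = (-(5/2) : ℝ) by norm_num,
    show ((((4:ℕ) : ℝ) + 1) / 2) = (5/2 : ℝ) by norm_num,
    Gamma_five_halves, Real.sqrt_div (Real.pi_pos.le), Real.sqrt_eq_rpow b]
  have h1 : b ^ (-(5/2) : ℝ) = (b ^ ((1:ℝ)/2))⁻¹ * (b ^ 2)⁻¹ := by
    rw [← Real.rpow_natCast b 2, ← Real.rpow_neg hb.le, ← Real.rpow_neg hb.le,
      ← Real.rpow_add hb]
    norm_num
  rw [h1, show (1 / (2:ℝ)) = ((1:ℝ)/2) by norm_num]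
  have h2 : (b : ℝ) ^ ((1:ℝ)/2) ≠ 0 := by positivity
  generalize hs : b ^ ((1:ℝ)/2) = s at h2 ⊢
  field_simp


lemma shift_moment {b : ℝ} (hb : 0 < b) (k : ℕ) (μ : ℝ) :
    ∫ y : ℝ, (y + μ) ^ k * Real.exp (-b * y ^ 2)
      = ∑ j ∈ Finset.range (k + 1), (μ ^ (k - j) * (k.choose j : ℝ))
          * ∫ y : ℝ, y ^ j * Real.exp (-b * y ^ 2) := by
  have h : (fun y : ℝ => (y + μ) ^ k * Real.exp (-b * y ^ 2))
      = fun y : ℝ => ∑ j ∈ Finset.range (k + 1),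
        (μ ^ (k - j) * (k.choose j : ℝ)) * (y ^ j * Real.exp (-b * y ^ 2)) := by
    funext y
    rw [add_pow, Finset.sum_mul]
    exact Finset.sum_congr rfl fun j _ => by ring
  rw [h, integral_finset_sum _ fun j _ => (int_pow_exp hb j).const_mul _]
  exact Finset.sum_congr rfl fun j _ => integral_const_mul _ _

section Bridge
variable {μ : ℝ} {v : NNReal}

lemma integral_gaussianReal_eq (hv : v ≠ 0) (g : ℝ → ℝ) :
    ∫ x, g x ∂(gaussianReal μ v) = ∫ x, gaussianPDFReal μ v x * g x := by
  rw [gaussianReal_of_var_ne_zero μ hv]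
  have hd : (volume.withDensity (gaussianPDF μ v))
      = volume.withDensity (fun x => ((gaussianPDFReal μ v x).toNNReal : ENNReal)) := rfl
  rw [hd, integral_withDensity_eq_integral_smul
    ((measurable_gaussianPDFReal μ v).real_toNNReal) g]
  congr 1
  funext x
  rw [NNReal.smul_def, smul_eq_mul, Real.coe_toNNReal _ (gaussianPDFReal_nonneg μ v x)]

lemma integrable_gaussianReal_iff (hv : v ≠ 0) (g : ℝ → ℝ) :
    Integrable g (gaussianReal μ v)
      ↔ Integrable (fun x => g x * gaussianPDFReal μ v x) volume := by
  rw [gaussianReal_of_var_ne_zero μ hv]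
  rw [integrable_withDensity_iff (measurable_gaussianPDF μ v)
    (Filter.Eventually.of_forall fun x => ENNReal.ofReal_lt_top)]
  constructor <;> intro h <;> refine h.congr (Filter.Eventually.of_forall fun x => ?_) <;>
    simp [gaussianPDF, ENNReal.toReal_ofReal (gaussianPDFReal_nonneg μ v x)]

end Bridge

lemma gaussianReal_moments (μ : ℝ) (v : NNReal) :
    (∀ k : ℕ, Integrable (fun x => x ^ k) (gaussianReal μ v)) ∧
    (∫ x, x ^ 1 ∂(gaussianReal μ v)) = μ ∧
    (∫ x, x ^ 2 ∂(gaussianReal μ v)) = μ ^ 2 + (v : ℝ) ∧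
    (∫ x, x ^ 4 ∂(gaussianReal μ v)) = μ ^ 4 + 6 * μ ^ 2 * (v : ℝ) + 3 * (v : ℝ) ^ 2 := by
  by_cases hv : v = 0
  · subst hv
    rw [gaussianReal_zero_var]
    refine ⟨fun k => ?_, ?_, ?_, ?_⟩
    · refine (integrable_const (μ ^ k)).congr ?_
      simp [Filter.EventuallyEq, MeasureTheory.ae_dirac_eq]
    all_goals rw [integral_dirac]; push_cast; ring
  -- main case
  have ht : 0 < (v : ℝ) := by
    have := pos_iff_ne_zero.mpr hv
    exact_mod_cast this
  obtain ⟨b, hb, hbv⟩ : ∃ b : ℝ, 0 < b ∧ b = (2 * (v : ℝ))⁻¹ := ⟨_, by positivity, rfl⟩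
  obtain ⟨c, hcv⟩ : ∃ c : ℝ, c = (Real.sqrt (2 * π * (v : ℝ)))⁻¹ := ⟨_, rfl⟩
  have hpdf : ∀ x, gaussianPDFReal μ v x = c * Real.exp (-b * (x - μ) ^ 2) := by
    intro x
    rw [gaussianPDFReal, hcv, hbv]
    congr 2
    ring
  have hE0 : c * ∫ y : ℝ, Real.exp (-b * y ^ 2) = 1 := by
    have h1 := integral_gaussianPDFReal_eq_one μ hv
    have step0 : ∫ x : ℝ, c * Real.exp (-b * (x - μ) ^ 2)
        = ∫ y : ℝ, c * Real.exp (-b * y ^ 2) :=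
      integral_sub_right_eq_self (fun y => c * Real.exp (-b * y ^ 2)) μ
    have h2 : ∫ x, gaussianPDFReal μ v x = c * ∫ y : ℝ, Real.exp (-b * y ^ 2) := by
      calc ∫ x, gaussianPDFReal μ v x = ∫ x : ℝ, c * Real.exp (-b * (x - μ) ^ 2) := by
            exact integral_congr_ae (Filter.Eventually.of_forall fun x => hpdf x)
        _ = ∫ y : ℝ, c * Real.exp (-b * y ^ 2) := step0
        _ = c * ∫ y : ℝ, Real.exp (-b * y ^ 2) := integral_const_mul _ _
    rw [← h2, h1]
  have hmom : ∀ k : ℕ, ∫ x, x ^ k ∂(gaussianReal μ v)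
      = c * ∫ y : ℝ, (y + μ) ^ k * Real.exp (-b * y ^ 2) := by
    intro k
    rw [integral_gaussianReal_eq hv]
    have step : ∫ x : ℝ, c * ((x + -μ + μ) ^ k * Real.exp (-b * (x + -μ) ^ 2))
        = ∫ y : ℝ, c * ((y + μ) ^ k * Real.exp (-b * y ^ 2)) :=
      integral_add_right_eq_self (fun y => c * ((y + μ) ^ k * Real.exp (-b * y ^ 2))) (-μ)
    calc ∫ x, gaussianPDFReal μ v x * x ^ k
        = ∫ x : ℝ, c * ((x + -μ + μ) ^ k * Real.exp (-b * (x + -μ) ^ 2)) := by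
          refine integral_congr_ae (Filter.Eventually.of_forall fun x => ?_)
          show gaussianPDFReal μ v x * x ^ k
              = c * ((x + -μ + μ) ^ k * Real.exp (-b * (x + -μ) ^ 2))
          have e1 : x + -μ + μ = x := by ring
          have e2 : x + -μ = x - μ := by ring
          rw [e1, e2, hpdf x]
          ring
      _ = ∫ y : ℝ, c * ((y + μ) ^ k * Real.exp (-b * y ^ 2)) := step
      _ = c * ∫ y : ℝ, (y + μ) ^ k * Real.exp (-b * y ^ 2) := integral_const_mul _ _
  have hint : ∀ k : ℕ, Integrable (fun x => x ^ k) (gaussianReal μ v) := by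
    intro k
    rw [integrable_gaussianReal_iff hv]
    have h1 : Integrable (fun x : ℝ => (x - μ + μ) ^ k * Real.exp (-b * (x - μ) ^ 2)) :=
      (int_pow_shift_exp hb k μ).comp_sub_right μ
    refine (h1.const_mul c).congr (Filter.Eventually.of_forall fun x => ?_)
    show c * ((x - μ + μ) ^ k * Real.exp (-b * (x - μ) ^ 2))
        = x ^ k * gaussianPDFReal μ v x
    have e1 : x - μ + μ = x := by ring
    rw [e1, hpdf x]
    ring
  have hvb : (v : ℝ) = (2 * b)⁻¹ := by rw [hbv]; field_simp
  have hcne : c ≠ 0 := by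
    rw [hcv]
    have : 0 < Real.sqrt (2 * π * (v : ℝ)) := Real.sqrt_pos.mpr (by positivity)
    positivity
  have hbne : (2 : ℝ) * b ≠ 0 := by positivity
  refine ⟨hint, ?_, ?_, ?_⟩
  · rw [hmom 1, shift_moment hb 1 μ]
    simp only [Finset.sum_range_succ, Finset.sum_range_zero, zero_add]
    rw [K_odd 1 odd_one]
    have h00 : (∫ y : ℝ, (y : ℝ) ^ 0 * Real.exp (-b * y ^ 2))
        = ∫ y : ℝ, Real.exp (-b * y ^ 2) := by
      refine integral_congr_ae (Filter.Eventually.of_forall fun y => ?_)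
      simp
    rw [h00]
    set S := ∫ y : ℝ, Real.exp (-b * y ^ 2) with hS
    have hSc : S = c⁻¹ := (inv_eq_of_mul_eq_one_right hE0).symm
    rw [hSc]
    simp only [Nat.choose_zero_right, Nat.choose_self, Nat.choose_one_right]
    push_cast
    field_simp
    simp
  · rw [hmom 2, shift_moment hb 2 μ]
    simp only [Finset.sum_range_succ, Finset.sum_range_zero, zero_add]
    rw [K_odd 1 odd_one, K2_eq hb]
    have h00 : (∫ y : ℝ, (y : ℝ) ^ 0 * Real.exp (-b * y ^ 2))
        = ∫ y : ℝ, Real.exp (-b * y ^ 2) := by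
      refine integral_congr_ae (Filter.Eventually.of_forall fun y => ?_)
      simp
    rw [h00]
    set S := ∫ y : ℝ, Real.exp (-b * y ^ 2) with hS
    have hSc : S = c⁻¹ := (inv_eq_of_mul_eq_one_right hE0).symm
    rw [hSc, hvb]
    simp only [Nat.choose_zero_right, Nat.choose_self, Nat.choose_one_right]
    push_cast
    field_simp
    ring
  · rw [hmom 4, shift_moment hb 4 μ]
    simp only [Finset.sum_range_succ, Finset.sum_range_zero, zero_add]
    rw [K_odd 1 odd_one, K_odd 3 (by decide), K2_eq hb, K4_eq hb]
    have h00 : (∫ y : ℝ, (y : ℝ) ^ 0 * Real.exp (-b * y ^ 2))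
        = ∫ y : ℝ, Real.exp (-b * y ^ 2) := by
      refine integral_congr_ae (Filter.Eventually.of_forall fun y => ?_)
      simp
    rw [h00]
    set S := ∫ y : ℝ, Real.exp (-b * y ^ 2) with hS
    have hSc : S = c⁻¹ := (inv_eq_of_mul_eq_one_right hE0).symm
    rw [hSc, hvb]
    simp only [Nat.choose_zero_right, Nat.choose_self, Nat.choose_one_right,
      show Nat.choose 4 2 = 6 from rfl, show Nat.choose 4 3 = 4 from rfl]
    push_cast
    field_simp
    ring


lemma abs_pow_mul_pow_le (x y : ℝ) {i j : ℕ} (h : i + j ≤ 4) :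
    |x ^ i * y ^ j| ≤ x ^ 4 + y ^ 4 + 1 := by
  have hM0 : (0 : ℝ) ≤ max |x| |y| := le_trans (abs_nonneg x) (le_max_left _ _)
  have h1 : |x ^ i * y ^ j| = |x| ^ i * |y| ^ j := by
    rw [abs_mul, abs_pow, abs_pow]
  have h2 : |x| ^ i * |y| ^ j ≤ max |x| |y| ^ i * max |x| |y| ^ j := by
    apply mul_le_mul
    · exact pow_le_pow_left₀ (abs_nonneg x) (le_max_left _ _) i
    · exact pow_le_pow_left₀ (abs_nonneg y) (le_max_right _ _) j
    · positivity
    · positivity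
  have h3 : max |x| |y| ^ i * max |x| |y| ^ j = max |x| |y| ^ (i + j) := (pow_add _ _ _).symm
  have h4 : max |x| |y| ^ (i + j) ≤ max |x| |y| ^ 4 + 1 := by
    rcases le_total (max |x| |y|) 1 with hle | hge
    · have := pow_le_one₀ hM0 hle (n := i + j)
      have h5 : (0:ℝ) ≤ max |x| |y| ^ 4 := by positivity
      linarith
    · have := pow_le_pow_right₀ hge h
      linarith
  have h6 : max |x| |y| ^ 4 ≤ x ^ 4 + y ^ 4 := by
    rcases max_choice |x| |y| with hm | hm <;> rw [hm, pow_abs, abs_of_nonneg (by positivity)]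
    · nlinarith [pow_nonneg (abs_nonneg y) 4, sq_nonneg (y^2), sq_nonneg y]
    · nlinarith [sq_nonneg (x^2), sq_nonneg x]
  calc |x ^ i * y ^ j| = |x| ^ i * |y| ^ j := h1
    _ ≤ max |x| |y| ^ (i + j) := h3 ▸ h2
    _ ≤ max |x| |y| ^ 4 + 1 := h4
    _ ≤ x ^ 4 + y ^ 4 + 1 := by linarith

/-- For a jointly Gaussian pair `(X₁, X₂)` (every real linear combination of `X₁` and `X₂` has a `gaussianReal` law, i.e. the law of the vector `(X₁, X₂)` is a Gaussian measure on `ℝ²`), with joint moments `m i j = E[X₁^i * X₂^j]`, the stated moment identity holds. -/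
theorem gaussian_joint_moment_1_3
    {Ω : Type*} [MeasureSpace Ω] [IsProbabilityMeasure (ℙ : Measure Ω)]
    (X₁ X₂ : Ω → ℝ) (hX₁ : Measurable X₁) (hX₂ : Measurable X₂)
    (hGauss : ∀ a b : ℝ, ∃ (μ : ℝ) (v : NNReal),
      Measure.map (fun ω => a * X₁ ω + b * X₂ ω) ℙ = gaussianReal μ v)
    (m : ℕ → ℕ → ℝ) (hm : ∀ i j, m i j = ∫ ω, X₁ ω ^ i * X₂ ω ^ j ∂ℙ) :
    m 1 3 = 3 * m 1 1 * m 0 2 - 2 * (m 0 1) ^ 3 * m 1 0 := by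
  -- step 1: integrability of powers of X₁ and X₂
  have key_int : ∀ (Z : Ω → ℝ), Measurable Z →
      (∃ (μ : ℝ) (v : NNReal), Measure.map Z ℙ = gaussianReal μ v) →
      ∀ k : ℕ, Integrable (fun ω => Z ω ^ k) ℙ := by
    rintro Z hZ ⟨μ, v, hlaw⟩ k
    have h1 : Integrable (fun x : ℝ => x ^ k) (Measure.map Z ℙ) := by
      rw [hlaw]; exact (gaussianReal_moments μ v).1 k
    rw [integrable_map_measure (by fun_prop) hZ.aemeasurable] at h1
    exact h1
  have hlaw1 : ∃ (μ : ℝ) (v : NNReal), Measure.map X₁ ℙ = gaussianReal μ v := by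
    obtain ⟨μ, v, h⟩ := hGauss 1 0
    refine ⟨μ, v, ?_⟩
    rw [← h]
    congr 1
    funext ω; ring
  have hlaw2 : ∃ (μ : ℝ) (v : NNReal), Measure.map X₂ ℙ = gaussianReal μ v := by
    obtain ⟨μ, v, h⟩ := hGauss 0 1
    refine ⟨μ, v, ?_⟩
    rw [← h]
    congr 1
    funext ω; ring
  have hI1 : ∀ k : ℕ, Integrable (fun ω => X₁ ω ^ k) ℙ := key_int X₁ hX₁ hlaw1
  have hI2 : ∀ k : ℕ, Integrable (fun ω => X₂ ω ^ k) ℙ := key_int X₂ hX₂ hlaw2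
  -- step 2: integrability of mixed moments
  have hprod : ∀ i j : ℕ, i + j ≤ 4 → Integrable (fun ω => X₁ ω ^ i * X₂ ω ^ j) ℙ := by
    intro i j hij
    have hdom : Integrable (fun ω => X₁ ω ^ 4 + X₂ ω ^ 4 + 1) ℙ :=
      ((hI1 4).add (hI2 4)).add (integrable_const 1)
    refine hdom.mono' ?_ (Filter.Eventually.of_forall fun ω => ?_)
    · exact ((hX₁.pow_const i).mul (hX₂.pow_const j)).aestronglyMeasurable
    · exact abs_pow_mul_pow_le _ _ hij
  -- step 3: key identity for each a
  have key : ∀ a : ℝ,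
      a ^ 4 * m 4 0 + 4 * a ^ 3 * m 3 1 + 6 * a ^ 2 * m 2 2 + 4 * a * m 1 3 + m 0 4
        = 3 * (a ^ 2 * m 2 0 + 2 * a * m 1 1 + m 0 2) ^ 2
          - 2 * (a * m 1 0 + m 0 1) ^ 4 := by
    intro a
    obtain ⟨μ, v, hlaw⟩ := hGauss a 1
    have hZmeas : Measurable fun ω => a * X₁ ω + X₂ ω := by fun_prop
    have hlaw' : Measure.map (fun ω => a * X₁ ω + X₂ ω) ℙ = gaussianReal μ v := by
      rw [← hlaw]; congr 1; funext ω; ring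
    have hZk : ∀ k : ℕ, ∫ ω, (a * X₁ ω + X₂ ω) ^ k ∂ℙ = ∫ x, x ^ k ∂(gaussianReal μ v) := by
      intro k
      rw [← hlaw', integral_map hZmeas.aemeasurable (by fun_prop)]
    -- expansions
    have e1 : ∫ ω, (a * X₁ ω + X₂ ω) ^ 1 ∂ℙ = a * m 1 0 + m 0 1 := by
      have hfun : (fun ω => (a * X₁ ω + X₂ ω) ^ 1)
          = fun ω => a * (X₁ ω ^ 1 * X₂ ω ^ 0) + X₁ ω ^ 0 * X₂ ω ^ 1 := by
        funext ω; ring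
      rw [hfun, integral_add ((hprod 1 0 (by norm_num)).const_mul a) (hprod 0 1 (by norm_num)),
        integral_const_mul, hm, hm]
    have e2 : ∫ ω, (a * X₁ ω + X₂ ω) ^ 2 ∂ℙ
        = a ^ 2 * m 2 0 + 2 * a * m 1 1 + m 0 2 := by
      have hfun : (fun ω => (a * X₁ ω + X₂ ω) ^ 2)
          = fun ω => a ^ 2 * (X₁ ω ^ 2 * X₂ ω ^ 0)
            + ((2 * a) * (X₁ ω ^ 1 * X₂ ω ^ 1) + X₁ ω ^ 0 * X₂ ω ^ 2) := by
        funext ω; ring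
      have I02 : Integrable (fun ω => X₁ ω ^ 0 * X₂ ω ^ 2) ℙ := hprod 0 2 (by norm_num)
      have I11 : Integrable (fun ω => 2 * a * (X₁ ω ^ 1 * X₂ ω ^ 1)) ℙ :=
        (hprod 1 1 (by norm_num)).const_mul _
      have hInner : Integrable
          (fun ω => 2 * a * (X₁ ω ^ 1 * X₂ ω ^ 1) + X₁ ω ^ 0 * X₂ ω ^ 2) ℙ := I11.add I02
      rw [hfun, integral_add ((hprod 2 0 (by norm_num)).const_mul _) hInner,
        integral_add I11 I02, integral_const_mul, integral_const_mul, hm, hm, hm]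
      ring
    have e4 : ∫ ω, (a * X₁ ω + X₂ ω) ^ 4 ∂ℙ
        = a ^ 4 * m 4 0 + 4 * a ^ 3 * m 3 1 + 6 * a ^ 2 * m 2 2 + 4 * a * m 1 3 + m 0 4 := by
      have hfun : (fun ω => (a * X₁ ω + X₂ ω) ^ 4)
          = fun ω => a ^ 4 * (X₁ ω ^ 4 * X₂ ω ^ 0)
            + ((4 * a ^ 3) * (X₁ ω ^ 3 * X₂ ω ^ 1)
              + ((6 * a ^ 2) * (X₁ ω ^ 2 * X₂ ω ^ 2)
                + ((4 * a) * (X₁ ω ^ 1 * X₂ ω ^ 3) + X₁ ω ^ 0 * X₂ ω ^ 4))) := by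
        funext ω; ring
      have I04 : Integrable (fun ω => X₁ ω ^ 0 * X₂ ω ^ 4) ℙ := hprod 0 4 (by norm_num)
      have I13 : Integrable (fun ω => 4 * a * (X₁ ω ^ 1 * X₂ ω ^ 3)) ℙ :=
        (hprod 1 3 (by norm_num)).const_mul _
      have I22 : Integrable (fun ω => 6 * a ^ 2 * (X₁ ω ^ 2 * X₂ ω ^ 2)) ℙ :=
        (hprod 2 2 (by norm_num)).const_mul _
      have I31 : Integrable (fun ω => 4 * a ^ 3 * (X₁ ω ^ 3 * X₂ ω ^ 1)) ℙ :=
        (hprod 3 1 (by norm_num)).const_mul _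
      have S1 : Integrable
          (fun ω => 4 * a * (X₁ ω ^ 1 * X₂ ω ^ 3) + X₁ ω ^ 0 * X₂ ω ^ 4) ℙ := I13.add I04
      have S2 : Integrable (fun ω => 6 * a ^ 2 * (X₁ ω ^ 2 * X₂ ω ^ 2)
          + (4 * a * (X₁ ω ^ 1 * X₂ ω ^ 3) + X₁ ω ^ 0 * X₂ ω ^ 4)) ℙ := I22.add S1
      have S3 : Integrable (fun ω => 4 * a ^ 3 * (X₁ ω ^ 3 * X₂ ω ^ 1)
          + (6 * a ^ 2 * (X₁ ω ^ 2 * X₂ ω ^ 2)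
            + (4 * a * (X₁ ω ^ 1 * X₂ ω ^ 3) + X₁ ω ^ 0 * X₂ ω ^ 4))) ℙ := I31.add S2
      rw [hfun, integral_add ((hprod 4 0 (by norm_num)).const_mul _) S3,
        integral_add I31 S2, integral_add I22 S1, integral_add I13 I04,
        integral_const_mul, integral_const_mul, integral_const_mul, integral_const_mul,
        hm, hm, hm, hm, hm]
      ring
    obtain ⟨-, hM1, hM2, hM4⟩ := gaussianReal_moments μ v
    have g1 : a * m 1 0 + m 0 1 = μ := by rw [← e1, hZk 1, hM1]
    have g2 : a ^ 2 * m 2 0 + 2 * a * m 1 1 + m 0 2 = μ ^ 2 + (v : ℝ) := by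
      rw [← e2, hZk 2, hM2]
    have g4 : a ^ 4 * m 4 0 + 4 * a ^ 3 * m 3 1 + 6 * a ^ 2 * m 2 2 + 4 * a * m 1 3 + m 0 4
        = μ ^ 4 + 6 * μ ^ 2 * (v : ℝ) + 3 * (v : ℝ) ^ 2 := by
      rw [← e4, hZk 4, hM4]
    rw [g4, g2, g1]
    ring
  -- step 4: linear algebra
  linear_combination (1/6 : ℝ) * key 1 - (1/6 : ℝ) * key (-1)
    - (1/48 : ℝ) * key 2 + (1/48 : ℝ) * key (-2)
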